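/- arXiv:1910.09647 — 2 statements merged into one kernel-verified Lean document; each statement's English description precedes it below -/
import Mathlib

section
/- For an n×n positive semidefinite Hermitian matrix M and real c > 0, log det(I + c·M) ≥ n · log(1 + c · det(M)^{1/n}). -/
open Matrix ComplexOrder Finset

/-!
Diagonalising `M` gives `det M = ∏ λᵢ` and `det (1 + c • M) = ∏ (1 + c λᵢ)`, so the claim is the
superadditivity of the geometric mean, `1 + (∏ c λᵢ)^(1/n) ≤ (∏ (1 + c λᵢ))^(1/n)`: Minkowski's
determinant inequality for the commuting pair `1`, `c • M`. Dividing by the right-hand side, it is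
the sum of the AM-GM inequalities for the ratios `1 / (1 + c λᵢ)` and `c λᵢ / (1 + c λᵢ)`, whose
arithmetic means add up to `1`.
-/

namespace Real

variable {ι : Type*}

theorem geom_mean_add_geom_mean_le_weighted (s : Finset ι) (w x y : ι → ℝ)
    (hw : ∀ i ∈ s, 0 ≤ w i) (hw' : ∑ i ∈ s, w i = 1) (hx : ∀ i ∈ s, 0 ≤ x i)
    (hy : ∀ i ∈ s, 0 ≤ y i) (hxy : ∀ i ∈ s, 0 < x i + y i) :
    ∏ i ∈ s, x i ^ w i + ∏ i ∈ s, y i ^ w i ≤ ∏ i ∈ s, (x i + y i) ^ w i := by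
  have hP : 0 < ∏ i ∈ s, (x i + y i) ^ w i :=
    prod_pos fun i hi => rpow_pos_of_pos (hxy i hi) _
  have amgm (z : ι → ℝ) (hz : ∀ i ∈ s, 0 ≤ z i) :
      (∏ i ∈ s, z i ^ w i) / ∏ i ∈ s, (x i + y i) ^ w i ≤
        ∑ i ∈ s, w i * (z i / (x i + y i)) := by
    rw [← prod_div_distrib, ← prod_congr rfl fun i hi => div_rpow (hz i hi) (hxy i hi).le _]
    exact geom_mean_le_arith_mean_weighted s w _ hw hw' fun i hi =>
      div_nonneg (hz i hi) (hxy i hi).le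
  have hsum : ∑ i ∈ s, w i * (x i / (x i + y i)) + ∑ i ∈ s, w i * (y i / (x i + y i)) = 1 := by
    rw [← sum_add_distrib, ← hw']
    refine sum_congr rfl fun i hi => ?_
    rw [← mul_add, ← add_div, div_self (hxy i hi).ne', mul_one]
  rw [← div_le_one hP, add_div]
  exact hsum ▸ add_le_add (amgm x hx) (amgm y hy)

theorem one_add_mul_geom_mean_le [Fintype ι] [Nonempty ι] {c : ℝ} (hc : 0 ≤ c) {a : ι → ℝ}
    (ha : ∀ i, 0 ≤ a i) :
    1 + c * (∏ i, a i) ^ ((1 : ℝ) / Fintype.card ι) ≤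
      (∏ i, (1 + c * a i)) ^ ((1 : ℝ) / Fintype.card ι) := by
  have hca (i : ι) : 0 ≤ c * a i := mul_nonneg hc (ha i)
  have h := geom_mean_add_geom_mean_le_weighted univ (fun _ => (1 : ℝ) / Fintype.card ι)
    (fun _ => 1) (fun i => c * a i) (fun _ _ => by positivity) (by simp)
    (fun _ _ => zero_le_one) (fun i _ => hca i) (fun i _ => by linarith [hca i])
  simp only [one_rpow, prod_const_one] at h
  rw [finsetProd_rpow _ (fun i => c * a i) (fun i _ => hca i),
    finsetProd_rpow _ (fun i => 1 + c * a i) (fun i _ => by linarith [hca i]), prod_mul_distrib,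
    prod_const, card_univ, mul_rpow (by positivity) (prod_nonneg fun i _ => ha i), one_div,
    pow_rpow_inv_natCast hc Fintype.card_ne_zero] at h
  rwa [one_div]

end Real

theorem Matrix.IsHermitian.det_cfc {𝕜 n : Type*} [RCLike 𝕜] [Fintype n] [DecidableEq n]
    {A : Matrix n n 𝕜} (hA : A.IsHermitian) (f : ℝ → ℝ) :
    (cfc f A).det = ∏ i, (f (hA.eigenvalues i) : 𝕜) := by
  simp [hA.cfc_eq, IsHermitian.cfc, -Unitary.conjStarAlgAut_apply]

theorem Matrix.IsHermitian.det_one_add_smul {𝕜 n : Type*} [RCLike 𝕜] [Fintype n] [DecidableEq n]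
    {A : Matrix n n 𝕜} (hA : A.IsHermitian) (c : ℝ) :
    (1 + (c : 𝕜) • A).det = ∏ i, ((1 + c * hA.eigenvalues i : ℝ) : 𝕜) := by
  rw [← hA.det_cfc (fun x => 1 + c * x), cfc_add .., cfc_const_one .., cfc_const_mul .., cfc_id' ..,
    RCLike.real_smul_eq_coe_smul (K := 𝕜)]

theorem log_det_one_add_smul_ge (n : ℕ) (hn : 0 < n)
    (M : Matrix (Fin n) (Fin n) ℂ) (hM : M.PosSemidef) (c : ℝ) (hc : 0 < c) :
    (n : ℝ) * Real.log (1 + c * (M.det.re) ^ ((1 : ℝ) / n)) ≤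
      Real.log ((1 + (c : ℂ) • M).det.re) := by
  have : Nonempty (Fin n) := ⟨⟨0, hn⟩⟩
  set μ := hM.1.eigenvalues
  have hμ : ∀ i, 0 ≤ μ i := hM.eigenvalues_nonneg
  have hdet : M.det.re = ∏ i, μ i := by
    rw [hM.1.det_eq_prod_eigenvalues]; norm_cast
  have hdet_one_add : (1 + (c : ℂ) • M).det.re = ∏ i, (1 + c * μ i) := by
    exact_mod_cast congrArg Complex.re (hM.1.det_one_add_smul c)
  have hprod : 0 < ∏ i, (1 + c * μ i) := prod_pos fun i _ => by nlinarith [hμ i]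
  have hgm := Real.one_add_mul_geom_mean_le hc.le hμ
  rw [Fintype.card_fin] at hgm
  rw [hdet, hdet_one_add]
  calc (n : ℝ) * Real.log (1 + c * (∏ i, μ i) ^ ((1 : ℝ) / n))
      ≤ n * Real.log ((∏ i, (1 + c * μ i)) ^ ((1 : ℝ) / n)) := by
        have hG : 0 ≤ (∏ i, μ i) ^ ((1 : ℝ) / n) := Real.rpow_nonneg (prod_nonneg fun i _ => hμ i) _
        gcongr
    _ = Real.log (∏ i, (1 + c * μ i)) := by
        rw [Real.log_rpow hprod, ← mul_assoc, mul_one_div_cancel (by positivity), one_mul]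
end

section
/- More generally: if Θ is an n×n Hermitian PSD matrix with Θ ⪰ c·I for some c ≥ 0, and S ∈ ℂ^{K×n}, then det(S Θ S^H) ≥ c^K · det(S S^H). -/
/-!
Congruence by `S` preserves the Loewner order, so `c • S Sᴴ ≤ S Θ Sᴴ`, and the determinant is
monotone on positive semidefinite matrices: if `A = Mᴴ M ≤ B` with `M` invertible, then
`B = Mᴴ (1 + P) M` with `P ⪰ 0`, and `det (1 + P) = ∏ (1 + λᵢ) ≥ 1`.
-/

open Matrix ComplexOrder

namespace Matrix

variable {n 𝕜 : Type*} [Fintype n] [DecidableEq n] [RCLike 𝕜]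

lemma PosSemidef.one_le_det_one_add {P : Matrix n n 𝕜} (hP : P.PosSemidef) :
    1 ≤ (1 + P).det := by
  have hPsa : IsSelfAdjoint P := hP.1
  have h1P : cfc (fun x : ℝ ↦ 1 + x) P = 1 + P := by
    rw [cfc_const_add (1 : ℝ) (fun x ↦ x) P, cfc_id' ℝ P, map_one]
  rw [← h1P, hP.1.cfc_eq]
  simp only [IsHermitian.cfc, det_map, det_diagonal, Function.comp_apply, map_add, map_one]
  exact Finset.one_le_prod fun i _ ↦ by simpa using hP.eigenvalues_nonneg i

open MatrixOrder in
lemma PosSemidef.det_le_det {A B : Matrix n n 𝕜} (hA : A.PosSemidef) (hAB : (B - A).PosSemidef) :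
    A.det ≤ B.det := by
  rcases eq_or_ne A.det 0 with hA0 | hA0
  · rw [hA0]
    simpa using (hA.add hAB).det_nonneg
  obtain ⟨M, rfl⟩ := CStarAlgebra.nonneg_iff_eq_star_mul_self.mp hA.nonneg
  have hM : IsUnit M.det := by
    rw [det_mul] at hA0
    exact (right_ne_zero_of_mul hA0).isUnit
  have hMH : IsUnit Mᴴ.det := by rwa [det_conjTranspose, isUnit_star]
  obtain ⟨P, hP, hB⟩ : ∃ P : Matrix n n 𝕜, P.PosSemidef ∧ B = Mᴴ * (1 + P) * M := by
    refine ⟨_, hAB.conjTranspose_mul_mul_same M⁻¹, ?_⟩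
    rw [conjTranspose_nonsing_inv, mul_add, add_mul, mul_one, ← Matrix.mul_assoc,
      ← Matrix.mul_assoc, mul_nonsing_inv _ hMH, Matrix.one_mul, Matrix.mul_assoc,
      nonsing_inv_mul _ hM, Matrix.mul_one, star_eq_conjTranspose]
    abel
  calc (star M * M).det = (star M * M).det * 1 := (mul_one _).symm
    _ ≤ (star M * M).det * (1 + P).det :=
      mul_le_mul_of_nonneg_left hP.one_le_det_one_add hA.det_nonneg
    _ = B.det := by
      rw [hB, det_mul, det_mul, det_mul, star_eq_conjTranspose]
      ring

variable {m : Type*} [Fintype m] [DecidableEq m]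

lemma pow_card_mul_det_mul_conjTranspose_le {Θ : Matrix n n 𝕜} {c : 𝕜} (hc : 0 ≤ c)
    (hΘc : (Θ - c • 1).PosSemidef) (S : Matrix m n 𝕜) :
    c ^ Fintype.card m * (S * Sᴴ).det ≤ (S * Θ * Sᴴ).det := by
  have hScS : S * (c • (1 : Matrix n n 𝕜)) * Sᴴ = c • (S * Sᴴ) := by
    rw [Matrix.mul_smul, Matrix.mul_one, Matrix.smul_mul]
  have hcS : (c • (S * Sᴴ)).PosSemidef :=
    hScS ▸ (PosSemidef.one.smul hc).mul_mul_conjTranspose_same S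
  have hle := hcS.det_le_det <| by
    simpa only [Matrix.mul_sub, Matrix.sub_mul, hScS] using hΘc.mul_mul_conjTranspose_same S
  rwa [det_smul] at hle

end Matrix

theorem det_congruence_lower_bound_general
    (n K : ℕ)
    (Θ : Matrix (Fin n) (Fin n) ℂ)
    (c : ℝ) (hc : 0 ≤ c)
    (hΘc : (Θ - (c : ℂ) • (1 : Matrix (Fin n) (Fin n) ℂ)).PosSemidef)
    (S : Matrix (Fin K) (Fin n) ℂ) :
    c ^ K * ((S * Sᴴ).det.re) ≤ ((S * Θ * Sᴴ).det.re) := by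
  have h := pow_card_mul_det_mul_conjTranspose_le (Complex.zero_le_real.mpr hc) hΘc S
  rw [Fintype.card_fin, ← Complex.ofReal_pow] at h
  simpa only [Complex.re_ofReal_mul] using (Complex.le_def.mp h).1

theorem det_congruence_lower_bound
    (n K : ℕ) (hK : K ≤ n)
    (Θ : Matrix (Fin n) (Fin n) ℂ) (hΘ : Θ.PosSemidef)
    (c : ℝ) (hc : 0 ≤ c)
    (hΘc : (Θ - (c : ℂ) • (1 : Matrix (Fin n) (Fin n) ℂ)).PosSemidef)
    (S : Matrix (Fin K) (Fin n) ℂ) :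
    c ^ K * ((S * Sᴴ).det.re) ≤ ((S * Θ * Sᴴ).det.re) :=
  det_congruence_lower_bound_general n K Θ c hc hΘc S
end
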